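/- arXiv:1611.05112 — 4 statements merged into one kernel-verified Lean document; each statement's English description precedes it below -/
import Mathlib

section
/- Let u ∈ ℂ with |u| = 1 and u³ ≠ 1, let ω = (−1+i√3)/2, and let τ, τ′ ∈ ℂ. Suppose (A,B) and (A′,B′) are two pairs of 3×3 complex matrices such that: A and A′ are diagonalizable with characteristic polynomial (X−u²)(X−conj(u))²; B and B′ have characteristic polynomial (X−1)(X−ω)(X−conj(ω)); tr(AB) = tr(A′B′) = τ and tr(AB⁻¹) = tr(A′B′⁻¹) = τ′; and neither pair (A,B) nor (A′,B′) has a common invariant subspace of ℂ³ other than 0 and ℂ³. Then the pairs are simultaneously conjugate: there exists S ∈ GL(3,ℂ) with A′ = S A S⁻¹ and B′ = S B S⁻¹. -/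
open Matrix Polynomial

/-
In an eigenbasis of `B` (eigenvalues `1, ω, ω²`, distinct), `A` is the scalar `ū` plus a rank-one
matrix `v wᵀ`, because `A` is diagonalizable with the double eigenvalue `ū ≠ u²`. If a coordinate
`vᵢ` vanished, the coordinate hyperplane `xᵢ = 0` would be invariant under both matrices; so all
`vᵢ ≠ 0`, and rescaling the eigenbasis brings the pair to the normal form
`(ū + 𝟙 cᵀ, diag(1, ω, ω²))`. For it `tr(A Bᵏ) = ū ∑ᵢ ωⁱᵏ + ∑ᵢ cᵢ ωⁱᵏ`, and for `k = 0, 1, 2`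
these traces are fixed by the hypotheses: `tr A` by the characteristic polynomial, `tr AB = τ`, and
`tr AB² = τ'` since `B³ = 1`. The Vandermonde matrix of `1, ω, ω²` is invertible, so `c` is
determined and the two pairs have the same normal form.
-/

theorem Multiset.exists_eq_and_forall_ne_eq_of_map_univ_eq_cons_replicate {ι α : Type*} [Fintype ι]
    {d : ι → α} {a b : α} (hab : a ≠ b) {k : ℕ}
    (h : Finset.univ.val.map d = a ::ₘ Multiset.replicate k b) :
    ∃ j, d j = a ∧ ∀ i ≠ j, d i = b := by
  classical
  have hmem : ∀ i, d i = a ∨ d i = b := fun i => by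
    have : d i ∈ a ::ₘ replicate k b := h ▸ mem_map_of_mem d (Finset.mem_univ_val i)
    rw [mem_cons, mem_replicate] at this
    tauto
  have hcount : (Finset.univ.filter (fun i => a = d i)).card = 1 := by
    have := congrArg (count a) h
    rwa [count_map, count_cons_self, count_replicate, if_neg hab.symm, ← Finset.filter_val] at this
  obtain ⟨j, hj⟩ := Finset.card_eq_one.1 hcount
  have hfilter : ∀ i, a = d i ↔ i = j := fun i => by
    simpa using Finset.ext_iff.1 hj i
  exact ⟨j, ((hfilter j).2 rfl).symm, fun i hi => (hmem i).resolve_left fun hia =>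
    hi ((hfilter i).1 hia.symm)⟩

namespace Matrix

section CommRing

variable {n R : Type*} [Fintype n] [DecidableEq n] [CommRing R]

def SimilarPairs (A B A' B' : Matrix n n R) : Prop :=
  ∃ S : Matrix n n R, IsUnit S.det ∧ A' = S * A * S⁻¹ ∧ B' = S * B * S⁻¹

def IsIrreduciblePair (A B : Matrix n n R) : Prop :=
  ∀ W : Submodule R (n → R), (∀ x ∈ W, A *ᵥ x ∈ W) → (∀ x ∈ W, B *ᵥ x ∈ W) → W = ⊥ ∨ W = ⊤

theorem conj_smul_one_add_vecMulVec {S : Matrix n n R} (hS : IsUnit S.det) (β : R) (v w : n → R) :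
    S * (β • 1 + vecMulVec v w) * S⁻¹ = β • 1 + vecMulVec (S *ᵥ v) (w ᵥ* S⁻¹) := by
  rw [Matrix.mul_add, Matrix.add_mul, mul_vecMulVec, vecMulVec_mul, mul_smul_comm, smul_mul_assoc,
    Matrix.mul_one, mul_nonsing_inv S hS]

theorem trace_smul_one_add_vecMulVec_one_mul_diagonal_pow (β : R) (c μ : n → R) (k : ℕ) :
    trace ((β • 1 + vecMulVec 1 c) * diagonal μ ^ k) = β * ∑ i, μ i ^ k + ∑ i, c i * μ i ^ k := by
  rw [diagonal_pow, Matrix.add_mul, vecMulVec_mul, trace_add, smul_mul, Matrix.one_mul, trace_smul,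
    trace_vecMulVec, trace_diagonal]
  simp [dotProduct, vecMul_diagonal]

theorem pow_eq_one_of_charpoly_eq_X_pow_sub_one {B : Matrix n n R} {k : ℕ}
    (h : B.charpoly = X ^ k - 1) : B ^ k = 1 := by
  simpa [h, sub_eq_zero] using aeval_self_charpoly B

theorem inv_eq_pow_of_charpoly_eq_X_pow_sub_one {B : Matrix n n R} {k : ℕ}
    (h : B.charpoly = X ^ (k + 1) - 1) : B⁻¹ = B ^ k :=
  inv_eq_right_inv <| by rw [← pow_succ', pow_eq_one_of_charpoly_eq_X_pow_sub_one h]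

namespace SimilarPairs

variable {A B A' B' A'' B'' : Matrix n n R}

theorem symm (h : SimilarPairs A B A' B') : SimilarPairs A' B' A B := by
  obtain ⟨S, hS, rfl, rfl⟩ := h
  refine ⟨S⁻¹, isUnit_nonsing_inv_det S hS, ?_, ?_⟩ <;>
    simp only [nonsing_inv_nonsing_inv S hS, Matrix.mul_assoc, nonsing_inv_mul_cancel_left S _ hS,
      nonsing_inv_mul S hS, Matrix.mul_one]

theorem trans (h : SimilarPairs A B A' B') (h' : SimilarPairs A' B' A'' B'') :
    SimilarPairs A B A'' B'' := by
  obtain ⟨S, hS, rfl, rfl⟩ := h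
  obtain ⟨T, hT, rfl, rfl⟩ := h'
  refine ⟨T * S, by rw [det_mul]; exact hT.mul hS, ?_, ?_⟩ <;>
    simp only [Matrix.mul_inv_rev, Matrix.mul_assoc]

theorem trace_mul_pow_eq (h : SimilarPairs A B A' B') (k : ℕ) :
    trace (A' * B' ^ k) = trace (A * B ^ k) := by
  obtain ⟨S, hS, rfl, rfl⟩ := h
  have hSu : IsUnit S := (isUnit_iff_isUnit_det S).2 hS
  have hconj : S * A * S⁻¹ * (S * B * S⁻¹) ^ k = S * (A * B ^ k) * S⁻¹ := by
    rw [← hSu.unit_spec, ← coe_units_inv, Units.conj_pow]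
    simp only [Matrix.mul_assoc, Units.inv_mul_cancel_left]
  rw [hconj, trace_conj hSu]

theorem isIrreduciblePair (h : SimilarPairs A B A' B') (hirr : IsIrreduciblePair A B) :
    IsIrreduciblePair A' B' := by
  obtain ⟨S, hS, rfl, rfl⟩ := h
  have hSS : S * S⁻¹ = 1 := mul_nonsing_inv S hS
  have intertwine : ∀ M x, S *ᵥ (M *ᵥ x) = (S * M * S⁻¹) *ᵥ (S *ᵥ x) := fun M x => by
    simp only [mulVec_mulVec, Matrix.mul_assoc, nonsing_inv_mul S hS, Matrix.mul_one]
  intro W hA hB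
  have hpre : ∀ y, S *ᵥ (S⁻¹ *ᵥ y) = y := fun y => by rw [mulVec_mulVec, hSS, one_mulVec]
  rcases hirr (W.comap S.mulVecLin) (fun x hx => by simpa [intertwine] using hA _ hx)
    (fun x hx => by simpa [intertwine] using hB _ hx) with h | h
  · refine Or.inl (eq_bot_iff.2 fun y hy => ?_)
    have : S⁻¹ *ᵥ y ∈ W.comap S.mulVecLin := by simpa [hpre] using hy
    rw [h, Submodule.mem_bot] at this
    rw [Submodule.mem_bot, ← hpre y, this, mulVec_zero]
  · refine Or.inr (eq_top_iff.2 fun y _ => ?_)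
    have : S⁻¹ *ᵥ y ∈ W.comap S.mulVecLin := h ▸ Submodule.mem_top
    simpa [hpre] using this

end SimilarPairs

end CommRing

section Field

variable {n K : Type*} [Fintype n] [DecidableEq n] [Field K]

theorem exists_eq_conj_diagonal_of_charpoly_eq_prod {B : Matrix n n K} {μ : n → K}
    (hμ : Function.Injective μ) (hB : B.charpoly = ∏ i, (X - C (μ i))) :
    ∃ Q : Matrix n n K, IsUnit Q.det ∧ B = Q * diagonal μ * Q⁻¹ := by
  have heig : ∀ i, Module.End.HasEigenvalue B.toLin' (μ i) := fun i => by
    rw [Module.End.hasEigenvalue_iff_isRoot_charpoly, charpoly_toLin', hB, IsRoot,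
      eval_prod, Finset.prod_eq_zero_iff]
    exact ⟨i, Finset.mem_univ i, by simp⟩
  choose x hx using fun i => (heig i).exists_hasEigenvector
  let Q : Matrix n n K := of fun i j => x j i
  have hQ : IsUnit Q := linearIndependent_cols_iff_isUnit.1 <|
    Module.End.eigenvectors_linearIndependent' B.toLin' μ hμ x hx
  have hBQ : B * Q = Q * diagonal μ := by
    ext i j
    rw [mul_diagonal]
    have := congrFun (Module.End.mem_eigenspace_iff.1 (hx j).1) i
    simpa [mulVec, dotProduct, mul_apply, Q, mul_comm] using this
  have hQdet := (isUnit_iff_isUnit_det Q).1 hQ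
  exact ⟨Q, hQdet, by rw [← hBQ, mul_nonsing_inv_cancel_right _ _ hQdet]⟩

theorem exists_eq_smul_one_add_vecMulVec_of_charpoly_eq {A : Matrix n n K} {a b : K} {k : ℕ}
    (hab : a ≠ b) (hdiag : ∃ P : Matrix n n K, IsUnit P.det ∧ ∃ d : n → K, A = P * diagonal d * P⁻¹)
    (hcp : A.charpoly = (X - C a) * (X - C b) ^ k) :
    ∃ v w : n → K, A = b • 1 + vecMulVec v w := by
  obtain ⟨P, hP, d, rfl⟩ := hdiag
  have hroots : Finset.univ.val.map d = a ::ₘ Multiset.replicate k b := by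
    have hPu := (isUnit_iff_isUnit_det P).2 hP
    rw [← hPu.unit_spec, charpoly_units_conj, charpoly_diagonal] at hcp
    rw [← roots_multiset_prod_X_sub_C (Finset.univ.val.map d), Multiset.map_map]
    change (∏ i, (X - C (d i))).roots = _
    rw [hcp, roots_mul (mul_ne_zero (X_sub_C_ne_zero a) (pow_ne_zero k (X_sub_C_ne_zero b))),
      roots_X_sub_C, roots_pow, roots_X_sub_C, Multiset.nsmul_singleton, Multiset.singleton_add]
  obtain ⟨j, hja, hjb⟩ :=
    Multiset.exists_eq_and_forall_ne_eq_of_map_univ_eq_cons_replicate hab hroots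
  have hd : diagonal d = b • 1 + vecMulVec (Pi.single j (a - b)) (Pi.single j 1) := by
    ext i l
    by_cases hij : i = j <;> by_cases hlj : l = j <;>
      simp [hij, hlj, eq_comm (a := j), hja, hjb, diagonal_apply, one_apply, vecMulVec_apply]
  exact ⟨_, _, by rw [hd, conj_smul_one_add_vecMulVec hP]⟩

theorem IsIrreduciblePair.exists_ne_apply_ne_zero [Nontrivial n] {A : Matrix n n K} {μ : n → K}
    (hirr : IsIrreduciblePair A (diagonal μ)) (i : n) : ∃ j ≠ i, A i j ≠ 0 := by
  by_contra! hrow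
  let W : Submodule K (n → K) := LinearMap.ker (LinearMap.proj i)
  have hmem : ∀ x, x ∈ W ↔ x i = 0 := fun x => Iff.rfl
  have hAW : ∀ x ∈ W, A *ᵥ x ∈ W := fun x hx => by
    rw [hmem] at hx ⊢
    rw [mulVec, dotProduct, Finset.sum_eq_single i (fun j _ hj => by rw [hrow j hj, zero_mul])
      (by simp), hx, mul_zero]
  have hBW : ∀ x ∈ W, diagonal μ *ᵥ x ∈ W := fun x hx => by
    rw [hmem] at hx ⊢
    rw [mulVec_diagonal, hx, mul_zero]
  obtain ⟨j, hj⟩ := exists_ne i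
  rcases hirr W hAW hBW with h | h
  · have : Pi.single j (1 : K) ∈ W := (hmem _).2 (Pi.single_eq_of_ne hj.symm 1)
    rw [h, Submodule.mem_bot] at this
    simpa using congrFun this j
  · have : Pi.single i (1 : K) ∈ W := h ▸ Submodule.mem_top
    simp [hmem] at this

theorem similarPairs_smul_one_add_vecMulVec_of_ne_zero {a : n → K} (ha : ∀ i, a i ≠ 0) (β : K)
    (b μ : n → K) :
    SimilarPairs (β • 1 + vecMulVec 1 (b * a)) (diagonal μ)
      (β • 1 + vecMulVec a b) (diagonal μ) := by
  have hdet : IsUnit (diagonal a).det := by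
    rw [det_diagonal, isUnit_iff_ne_zero]
    exact Finset.prod_ne_zero_iff.2 fun i _ => ha i
  have hinv : (diagonal a)⁻¹ = diagonal a⁻¹ := inv_eq_right_inv <| by
    rw [diagonal_mul_diagonal, ← diagonal_one]
    exact congrArg diagonal (funext fun i => mul_inv_cancel₀ (ha i))
  refine ⟨diagonal a, hdet, ?_, ?_⟩
  · rw [conj_smul_one_add_vecMulVec hdet, hinv]
    congr 2 <;> funext i <;> simp [mulVec_diagonal, vecMul_diagonal, ha i]
  · rw [hinv, diagonal_mul_diagonal, diagonal_mul_diagonal]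
    exact congrArg diagonal (funext fun i => by simp [mul_comm (a i), ha i])

theorem exists_similarPairs_smul_one_add_vecMulVec_one [Nontrivial n] {A B : Matrix n n K}
    {β : K} {μ : n → K} (hA : ∃ v w : n → K, A = β • 1 + vecMulVec v w)
    (hB : ∃ Q : Matrix n n K, IsUnit Q.det ∧ B = Q * diagonal μ * Q⁻¹)
    (hirr : IsIrreduciblePair A B) :
    ∃ c : n → K, SimilarPairs (β • 1 + vecMulVec 1 c) (diagonal μ) A B := by
  obtain ⟨v, w, rfl⟩ := hA
  obtain ⟨Q, hQ, rfl⟩ := hB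
  have hQinv : IsUnit Q⁻¹.det := isUnit_nonsing_inv_det Q hQ
  set a := Q⁻¹ *ᵥ v
  set b := w ᵥ* Q⁻¹⁻¹
  have hbase : SimilarPairs (β • 1 + vecMulVec a b) (diagonal μ)
      (β • 1 + vecMulVec v w) (Q * diagonal μ * Q⁻¹) := by
    refine ⟨Q, hQ, ?_, rfl⟩
    rw [← conj_smul_one_add_vecMulVec hQinv, nonsing_inv_nonsing_inv Q hQ]
    simp only [Matrix.mul_assoc, mul_nonsing_inv_cancel_left Q _ hQ, mul_nonsing_inv Q hQ,
      Matrix.mul_one]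
  have ha : ∀ i, a i ≠ 0 := fun i => by
    obtain ⟨j, hji, hij⟩ := (hbase.symm.isIrreduciblePair hirr).exists_ne_apply_ne_zero i
    intro hai
    simp [vecMulVec_apply, hai, one_apply_ne hji.symm] at hij
  exact ⟨b * a, (similarPairs_smul_one_add_vecMulVec_of_ne_zero ha β b μ).trans hbase⟩

theorem eq_of_sum_mul_pow_eq {m : ℕ} {μ : Fin m → K} (hμ : Function.Injective μ) {c c' : Fin m → K}
    (h : ∀ k : Fin m, ∑ i, c i * μ i ^ (k : ℕ) = ∑ i, c' i * μ i ^ (k : ℕ)) : c = c' := by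
  have hV : IsUnit (vandermonde μ) := by
    rw [isUnit_iff_isUnit_det, isUnit_iff_ne_zero]
    exact det_vandermonde_ne_zero_iff.2 hμ
  exact vecMul_injective_iff_isUnit.2 hV (funext h)

theorem SimilarPairs.of_trace_mul_pow_eq {m : ℕ} {A B A' B' : Matrix (Fin m) (Fin m) K}
    {β : K} {μ : Fin m → K} (hμ : Function.Injective μ) {c c' : Fin m → K}
    (hc : SimilarPairs (β • 1 + vecMulVec 1 c) (diagonal μ) A B)
    (hc' : SimilarPairs (β • 1 + vecMulVec 1 c') (diagonal μ) A' B')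
    (htr : ∀ k : Fin m, trace (A * B ^ (k : ℕ)) = trace (A' * B' ^ (k : ℕ))) :
    SimilarPairs A B A' B' := by
  obtain rfl : c = c' := eq_of_sum_mul_pow_eq hμ fun k => by
    have := (hc.trace_mul_pow_eq k).symm.trans ((htr k).trans (hc'.trace_mul_pow_eq k))
    rwa [trace_smul_one_add_vecMulVec_one_mul_diagonal_pow,
      trace_smul_one_add_vecMulVec_one_mul_diagonal_pow, add_right_inj] at this
  exact hc.symm.trans hc'

end Field

end Matrix

theorem Complex.sq_ne_conj_of_norm_eq_one {u : ℂ} (hu : ‖u‖ = 1) (hu3 : u ^ 3 ≠ 1) :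
    u ^ 2 ≠ starRingEnd ℂ u := by
  have hmul : u * starRingEnd ℂ u = 1 := by
    rw [mul_conj, normSq_eq_norm_sq, hu, one_pow, ofReal_one]
  exact fun h => hu3 (by rw [pow_succ', h, hmul])

theorem Complex.sq_add_self_add_one_eq_zero_of_eq {ω : ℂ} (hω : ω = (-1 + I * Real.sqrt 3) / 2) :
    ω ^ 2 + ω + 1 = 0 := by
  have hs : ((Real.sqrt 3 : ℝ) : ℂ) ^ 2 = 3 := by norm_cast; simp
  subst hω
  linear_combination (((Real.sqrt 3 : ℝ) : ℂ) ^ 2 / 4) * I_sq + (-1 / 4 : ℂ) * hs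

theorem Complex.isPrimitiveRoot_three_of_eq {ω : ℂ} (hω : ω = (-1 + I * Real.sqrt 3) / 2) :
    IsPrimitiveRoot ω 3 := by
  rw [← isRoot_cyclotomic_iff, cyclotomic_three, IsRoot, eval_add, eval_add, eval_pow, eval_X,
    eval_one]
  exact sq_add_self_add_one_eq_zero_of_eq hω

theorem Complex.conj_eq_sq_of_eq {ω : ℂ} (hω : ω = (-1 + I * Real.sqrt 3) / 2) :
    starRingEnd ℂ ω = ω ^ 2 := by
  have hconj : starRingEnd ℂ ω = -1 - ω := by
    rw [hω, map_div₀, map_add, map_neg, map_one, map_mul, conj_I, conj_ofReal, map_ofNat]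
    ring
  linear_combination hconj - sq_add_self_add_one_eq_zero_of_eq hω

/-- Two irreducible pairs of 3×3 complex matrices with the prescribed
characteristic polynomials and pair-traces are simultaneously conjugate. -/
theorem stmt_0 (u τ τ' : ℂ) (hu : ‖u‖ = 1) (hu3 : u ^ 3 ≠ 1)
    (ω : ℂ) (hω : ω = (-1 + Complex.I * Real.sqrt 3) / 2)
    (A B A' B' : Matrix (Fin 3) (Fin 3) ℂ)
    -- A and A' are diagonalizable
    (hAdiag : ∃ P : Matrix (Fin 3) (Fin 3) ℂ, IsUnit P.det ∧
      ∃ d : Fin 3 → ℂ, A = P * Matrix.diagonal d * P⁻¹)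
    (hA'diag : ∃ P : Matrix (Fin 3) (Fin 3) ℂ, IsUnit P.det ∧
      ∃ d : Fin 3 → ℂ, A' = P * Matrix.diagonal d * P⁻¹)
    -- characteristic polynomials
    (hAcp : A.charpoly = (X - C (u ^ 2)) * (X - C (starRingEnd ℂ u)) ^ 2)
    (hA'cp : A'.charpoly = (X - C (u ^ 2)) * (X - C (starRingEnd ℂ u)) ^ 2)
    (hBcp : B.charpoly = (X - C 1) * (X - C ω) * (X - C (starRingEnd ℂ ω)))
    (hB'cp : B'.charpoly = (X - C 1) * (X - C ω) * (X - C (starRingEnd ℂ ω)))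
    -- trace conditions
    (htr1 : (A * B).trace = τ) (htr1' : (A' * B').trace = τ)
    (htr2 : (A * B⁻¹).trace = τ') (htr2' : (A' * B'⁻¹).trace = τ')
    -- irreducibility: no common invariant subspace other than 0 and ℂ³
    (hirr : ∀ W : Submodule ℂ (Fin 3 → ℂ),
      (∀ x ∈ W, A.mulVec x ∈ W) → (∀ x ∈ W, B.mulVec x ∈ W) → W = ⊥ ∨ W = ⊤)
    (hirr' : ∀ W : Submodule ℂ (Fin 3 → ℂ),
      (∀ x ∈ W, A'.mulVec x ∈ W) → (∀ x ∈ W, B'.mulVec x ∈ W) → W = ⊥ ∨ W = ⊤) :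
    ∃ S : Matrix (Fin 3) (Fin 3) ℂ, IsUnit S.det ∧
      A' = S * A * S⁻¹ ∧ B' = S * B * S⁻¹ := by
  have hprim := Complex.isPrimitiveRoot_three_of_eq hω
  let μ : Fin 3 → ℂ := fun i => ω ^ (i : ℕ)
  have hμ : Function.Injective μ := fun i j h => Fin.ext (hprim.pow_inj i.2 j.2 h)
  have hprod : (X - C 1) * (X - C ω) * (X - C (starRingEnd ℂ ω)) = ∏ i, (X - C (μ i)) := by
    simp [Fin.prod_univ_three, μ, Complex.conj_eq_sq_of_eq hω]
  have hcube : ∏ i, (X - C (μ i)) = X ^ 3 - 1 := by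
    rw [← C_1, X_pow_sub_C_eq_prod hprim three_pos (one_pow 3)]
    simp [Fin.prod_univ_three, Finset.prod_range_succ, μ]
  have hu' := Complex.sq_ne_conj_of_norm_eq_one hu hu3
  obtain ⟨c, hc⟩ := exists_similarPairs_smul_one_add_vecMulVec_one
    (exists_eq_smul_one_add_vecMulVec_of_charpoly_eq hu' hAdiag hAcp)
    (exists_eq_conj_diagonal_of_charpoly_eq_prod hμ (hBcp.trans hprod)) hirr
  obtain ⟨c', hc'⟩ := exists_similarPairs_smul_one_add_vecMulVec_one
    (exists_eq_smul_one_add_vecMulVec_of_charpoly_eq hu' hA'diag hA'cp)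
    (exists_eq_conj_diagonal_of_charpoly_eq_prod hμ (hB'cp.trans hprod)) hirr'
  refine SimilarPairs.of_trace_mul_pow_eq hμ hc hc' fun k => ?_
  fin_cases k
  · simp [trace_eq_neg_charpoly_coeff, hAcp, hA'cp]
  · simpa using htr1.trans htr1'.symm
  · rw [← inv_eq_pow_of_charpoly_eq_X_pow_sub_one (hBcp.trans (hprod.trans hcube)),
      ← inv_eq_pow_of_charpoly_eq_X_pow_sub_one (hB'cp.trans (hprod.trans hcube))]
    exact htr2.trans htr2'.symm
end

section
/- Let u ∈ ℂ with |u| = 1 and u³ ≠ 1, and let τ, τ′ ∈ ℂ. Then there exists a nonzero Hermitian 3×3 matrix K with R₁ᴴ K R₁ = K and Jᴴ K J = K if and only if τ′ = −u·conj(τ). Moreover, when τ′ = −u·conj(τ), every Hermitian matrix K satisfying R₁ᴴ K R₁ = K and Jᴴ K J = K is a real scalar multiple of the matrix H. -/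
open Matrix

noncomputable section

/-- The matrix R₁ = [[u², τ, τ′], [0, conj u, 0], [0, 0, conj u]]. -/
def R₁ (u τ τ' : ℂ) : Matrix (Fin 3) (Fin 3) ℂ :=
  !![u ^ 2, τ, τ'; 0, starRingEnd ℂ u, 0; 0, 0, starRingEnd ℂ u]

/-- The matrix Jmat = [[0,0,1],[1,0,0],[0,1,0]]. -/
def Jmat : Matrix (Fin 3) (Fin 3) ℂ := !![0, 0, 1; 1, 0, 0; 0, 1, 0]

/-- The Hermitian matrix H with α = 2 − u³ − conj(u)³ and β = (conj(u)² − u)τ. -/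
def H (u τ : ℂ) : Matrix (Fin 3) (Fin 3) ℂ :=
  let α : ℂ := 2 - u ^ 3 - (starRingEnd ℂ u) ^ 3
  let β : ℂ := ((starRingEnd ℂ u) ^ 2 - u) * τ
  !![α, β, starRingEnd ℂ β; starRingEnd ℂ β, α, β; β, starRingEnd ℂ β, α]

/-!
A Hermitian form invariant under the cyclic permutation `Jmat` is a Hermitian circulant
`hermCirculant a b` with `a` real. For such a form, the `(0,1)` and `(0,2)` entries of the
`R₁`-invariance equation read `b (1 - ū³) = ū² a τ` and `b̄ (1 - ū³) = ū² a τ'`. As `ū = u⁻¹` and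
`u³ ≠ 1`, the first equation determines `b` from `a`, which makes the form the real multiple
`(a / α) • H u τ` and vanish when `a = 0`; for `a ≠ 0`, comparing its conjugate with the second
equation gives `τ' = -u τ̄`. Conversely, once `ū = u⁻¹` is substituted, invariance of `H u τ` under
`R₁ u τ (-u τ̄)` is a rational identity in `u`, `τ` and `τ̄`.
-/

open ComplexConjugate

def hermCirculant (a b : ℂ) : Matrix (Fin 3) (Fin 3) ℂ :=
  !![a, b, conj b; conj b, a, b; b, conj b, a]

theorem H_eq_hermCirculant (u τ : ℂ) :
    H u τ = hermCirculant (2 - u ^ 3 - conj u ^ 3) ((conj u ^ 2 - u) * τ) := rfl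

theorem hermCirculant_eq_zero_iff {a b : ℂ} : hermCirculant a b = 0 ↔ a = 0 ∧ b = 0 := by
  constructor
  · intro h
    exact ⟨by simpa [hermCirculant] using congrFun (congrFun h 0) 0,
      by simpa [hermCirculant] using congrFun (congrFun h 0) 1⟩
  · rintro ⟨rfl, rfl⟩
    ext i j
    fin_cases i <;> fin_cases j <;> simp [hermCirculant]

theorem hermCirculant_conjTranspose {a : ℂ} (ha : conj a = a) (b : ℂ) :
    (hermCirculant a b)ᴴ = hermCirculant a b := by
  ext i j
  fin_cases i <;> fin_cases j <;> simp [hermCirculant, ha]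

theorem smul_hermCirculant {r : ℂ} (hr : conj r = r) (a b : ℂ) :
    r • hermCirculant a b = hermCirculant (r * a) (r * b) := by
  ext i j
  fin_cases i <;> fin_cases j <;> simp [hermCirculant, hr]

theorem Jmat_conjTranspose_mul_hermCirculant_mul_Jmat (a b : ℂ) :
    Jmatᴴ * hermCirculant a b * Jmat = hermCirculant a b := by
  ext i j
  fin_cases i <;> fin_cases j <;>
    simp [hermCirculant, Jmat, Matrix.mul_apply, Fin.sum_univ_three]

theorem eq_hermCirculant_of_Jmat_invariant {K : Matrix (Fin 3) (Fin 3) ℂ}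
    (hK : Kᴴ = K) (hJ : Jmatᴴ * K * Jmat = K) :
    K = hermCirculant (K 0 0) (K 0 1) ∧ conj (K 0 0) = K 0 0 := by
  have hK' i j : conj (K j i) = K i j := by simpa using congrFun (congrFun hK i) j
  have hJ' i j : K (i + 1) (j + 1) = K i j := by
    have := congrFun (congrFun hJ i) j
    fin_cases i <;> fin_cases j <;>
      simpa [Jmat, Matrix.mul_apply, Fin.sum_univ_three] using this
  have h11 : K 1 1 = K 0 0 := hJ' 0 0
  have h22 : K 2 2 = K 0 0 := (hJ' 1 1).trans h11
  have h12 : K 1 2 = K 0 1 := hJ' 0 1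
  have h20 : K 2 0 = K 0 1 := (hJ' 1 2).trans h12
  have h02 : K 0 2 = conj (K 0 1) := by rw [← hK' 0 2, h20]
  have h10 : K 1 0 = conj (K 0 1) := (hK' 1 0).symm
  have h21 : K 2 1 = conj (K 0 1) := by rw [← hK' 2 1, h12]
  refine ⟨?_, hK' 0 0⟩
  ext i j
  fin_cases i <;> fin_cases j <;> simp [hermCirculant, h11, h22, h12, h20, h02, h10, h21]

theorem hermCirculant_relations_of_R₁_invariant {u τ τ' a b : ℂ}
    (hR : (R₁ u τ τ')ᴴ * hermCirculant a b * R₁ u τ τ' = hermCirculant a b) :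
    b * (1 - conj u ^ 3) = conj u ^ 2 * a * τ ∧
      conj b * (1 - conj u ^ 3) = conj u ^ 2 * a * τ' := by
  have h01 := congrFun (congrFun hR 0) 1
  have h02 := congrFun (congrFun hR 0) 2
  simp only [R₁, hermCirculant, Fin.isValue, Matrix.mul_apply, conjTranspose_apply, of_apply,
    cons_val', cons_val_zero, cons_val_fin_one, RCLike.star_def, Fin.sum_univ_three, map_pow,
    cons_val_one, map_zero, zero_mul, add_zero, cons_val, mul_zero] at h01 h02
  constructor
  · linear_combination -h01
  · linear_combination -h02

theorem conj_two_sub_pow_three_sub_conj_pow_three (u : ℂ) :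
    conj (2 - u ^ 3 - conj u ^ 3) = 2 - u ^ 3 - conj u ^ 3 := by
  simp only [map_sub, map_pow, map_ofNat, Complex.conj_conj]
  ring

theorem H_conjTranspose (u τ : ℂ) : (H u τ)ᴴ = H u τ :=
  hermCirculant_conjTranspose (conj_two_sub_pow_three_sub_conj_pow_three u) _

theorem Jmat_conjTranspose_mul_H_mul_Jmat (u τ : ℂ) : Jmatᴴ * H u τ * Jmat = H u τ :=
  Jmat_conjTranspose_mul_hermCirculant_mul_Jmat _ _

theorem one_sub_conj_pow_three_ne_zero {u : ℂ} (hu3 : u ^ 3 ≠ 1) : 1 - conj u ^ 3 ≠ 0 := by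
  rw [sub_ne_zero]
  intro h
  apply hu3
  simpa using (congrArg conj h).symm

theorem two_sub_pow_three_sub_conj_pow_three {u : ℂ} (hu : ‖u‖ = 1) :
    2 - u ^ 3 - conj u ^ 3 = (1 - u ^ 3) * (1 - conj u ^ 3) := by
  have hu0 : u ≠ 0 := ne_zero_of_norm_ne_zero (by simp [hu])
  rw [← Complex.inv_eq_conj hu]
  field_simp
  ring

theorem two_sub_pow_three_sub_conj_pow_three_ne_zero {u : ℂ} (hu : ‖u‖ = 1) (hu3 : u ^ 3 ≠ 1) :
    2 - u ^ 3 - conj u ^ 3 ≠ 0 := by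
  rw [two_sub_pow_three_sub_conj_pow_three hu]
  exact mul_ne_zero (sub_ne_zero.mpr hu3.symm) (one_sub_conj_pow_three_ne_zero hu3)

theorem H_ne_zero {u : ℂ} (hu : ‖u‖ = 1) (hu3 : u ^ 3 ≠ 1) (τ : ℂ) : H u τ ≠ 0 := by
  rw [H_eq_hermCirculant, Ne, hermCirculant_eq_zero_iff]
  exact fun h => two_sub_pow_three_sub_conj_pow_three_ne_zero hu hu3 h.1

theorem R₁_invariant_H {u : ℂ} (hu : ‖u‖ = 1) (τ : ℂ) :
    (R₁ u τ (-u * conj τ))ᴴ * H u τ * R₁ u τ (-u * conj τ) = H u τ := by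
  have hu0 : u ≠ 0 := ne_zero_of_norm_ne_zero (by simp [hu])
  have hconj : conj u = u⁻¹ := (Complex.inv_eq_conj hu).symm
  ext i j
  fin_cases i <;> fin_cases j <;>
    simp only [R₁, H_eq_hermCirculant, hermCirculant, Matrix.mul_apply, Fin.sum_univ_three,
      conjTranspose_apply, of_apply, cons_val', cons_val, cons_val_fin_one, Fin.isValue,
      Fin.reduceFinMk, RCLike.star_def, map_mul, map_sub, map_neg, map_pow, map_zero,
      map_inv₀, inv_inv, Complex.conj_conj, hconj] <;>
    field_simp <;> ring

theorem eq_neg_mul_conj_of_R₁_relations {u τ τ' a b : ℂ} (hu : ‖u‖ = 1) (ha : conj a = a)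
    (ha0 : a ≠ 0) (h1 : b * (1 - conj u ^ 3) = conj u ^ 2 * a * τ)
    (h2 : conj b * (1 - conj u ^ 3) = conj u ^ 2 * a * τ') : τ' = -u * conj τ := by
  have hu0 : u ≠ 0 := ne_zero_of_norm_ne_zero (by simp [hu])
  have h1c : conj b * (1 - u ^ 3) = u ^ 2 * a * conj τ := by
    simpa [ha] using congrArg conj h1
  rw [← Complex.inv_eq_conj hu] at h2
  have h2' : conj b * (u ^ 3 - 1) = u * a * τ' := by
    field_simp at h2
    linear_combination h2
  have hsum : u * a * (τ' + u * conj τ) = 0 := by linear_combination -h2' - h1c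
  linear_combination (mul_eq_zero.mp hsum).resolve_left (mul_ne_zero hu0 ha0)

theorem hermCirculant_eq_real_smul_H {u τ a b : ℂ} (hu : ‖u‖ = 1) (hu3 : u ^ 3 ≠ 1)
    (ha : conj a = a) (h1 : b * (1 - conj u ^ 3) = conj u ^ 2 * a * τ) :
    ∃ c : ℝ, hermCirculant a b = (c : ℂ) • H u τ := by
  have hα0 := two_sub_pow_three_sub_conj_pow_three_ne_zero hu hu3
  have hb : b * (2 - u ^ 3 - conj u ^ 3) = a * ((conj u ^ 2 - u) * τ) := by
    have hu0 : u ≠ 0 := ne_zero_of_norm_ne_zero (by simp [hu])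
    rw [← Complex.inv_eq_conj hu] at h1 ⊢
    field_simp at h1 ⊢
    linear_combination (1 - u ^ 3) * h1
  have hc : conj (a / (2 - u ^ 3 - conj u ^ 3)) = a / (2 - u ^ 3 - conj u ^ 3) := by
    rw [map_div₀, ha, conj_two_sub_pow_three_sub_conj_pow_three]
  refine ⟨(a / (2 - u ^ 3 - conj u ^ 3)).re, ?_⟩
  rw [Complex.conj_eq_iff_re.mp hc, H_eq_hermCirculant, smul_hermCirculant hc]
  congr 1 <;> field_simp
  linear_combination hb

/-- existence of a nonzero invariant Hermitian form iff τ′ = −u·conj(τ),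
and uniqueness up to real scalar in that case. -/
theorem stmt_1 (u τ τ' : ℂ) (hu : ‖u‖ = 1) (hu3 : u ^ 3 ≠ 1) :
    ((∃ K : Matrix (Fin 3) (Fin 3) ℂ, K ≠ 0 ∧ Kᴴ = K ∧
        (R₁ u τ τ')ᴴ * K * R₁ u τ τ' = K ∧ Jmatᴴ * K * Jmat = K) ↔
      τ' = -u * starRingEnd ℂ τ) ∧
    (τ' = -u * starRingEnd ℂ τ →
      ∀ K : Matrix (Fin 3) (Fin 3) ℂ, Kᴴ = K →
        (R₁ u τ τ')ᴴ * K * R₁ u τ τ' = K → Jmatᴴ * K * Jmat = K →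
        ∃ c : ℝ, K = (c : ℂ) • H u τ) := by
  refine ⟨⟨?_, ?_⟩, ?_⟩
  · rintro ⟨K, hK0, hK, hR, hJ⟩
    obtain ⟨hKc, ha⟩ := eq_hermCirculant_of_Jmat_invariant hK hJ
    rw [hKc] at hR hK0
    obtain ⟨h1, h2⟩ := hermCirculant_relations_of_R₁_invariant hR
    refine eq_neg_mul_conj_of_R₁_relations hu ha (fun ha0 => hK0 ?_) h1 h2
    refine hermCirculant_eq_zero_iff.mpr ⟨ha0, ?_⟩
    simpa [ha0, one_sub_conj_pow_three_ne_zero hu3] using h1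
  · rintro rfl
    exact ⟨H u τ, H_ne_zero hu hu3 τ, H_conjTranspose u τ, R₁_invariant_H hu τ,
      Jmat_conjTranspose_mul_H_mul_Jmat u τ⟩
  · rintro rfl K hK hR hJ
    obtain ⟨hKc, ha⟩ := eq_hermCirculant_of_Jmat_invariant hK hJ
    rw [hKc] at hR ⊢
    exact hermCirculant_eq_real_smul_H hu hu3 ha (hermCirculant_relations_of_R₁_invariant hR).1

end
end

section
/- Let G be a group and r, j ∈ G with j³ = 1 and (rj)ⁿ = 1 for some positive integer n that is not divisible by 3. Then the subgroup of G generated by the three elements r, j r j⁻¹ and j⁻¹ r j equals the subgroup of G generated by r and j. -/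
/-- in any group, if j³ = 1 and (rj)ⁿ = 1 with n positive and not divisible
by 3, then ⟨r, jrj⁻¹, j⁻¹rj⟩ = ⟨r, j⟩. -/
theorem stmt_9 {G : Type*} [Group G] (r j : G) (n : ℕ) (hn : 0 < n) (h3 : ¬ (3 ∣ n))
    (hj : j ^ 3 = 1) (hrj : (r * j) ^ n = 1) :
    Subgroup.closure {r, j * r * j⁻¹, j⁻¹ * r * j} = Subgroup.closure {r, j} := by
  have hjjj : j * j * j = 1 := by rw [← hj, pow_succ, pow_succ, pow_one]
  have hj2 : j * j = j⁻¹ := eq_inv_of_mul_eq_one_left hjjj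
  have hjinv : j⁻¹ * j⁻¹ = j := by rw [← mul_inv_rev, hj2, inv_inv]
  set K := Subgroup.closure ({r, j * r * j⁻¹, j⁻¹ * r * j} : Set G) with hK
  have hr : r ∈ K := Subgroup.subset_closure (by simp)
  have ha : j * r * j⁻¹ ∈ K := Subgroup.subset_closure (by simp)
  have hb : j⁻¹ * r * j ∈ K := Subgroup.subset_closure (by simp)
  have hcube : (r * j) ^ 3 ∈ K := by
    have key : r * (j * r * j⁻¹) * (j⁻¹ * r * j) = (r * j) ^ 3 := by
      rw [show r * (j * r * j⁻¹) * (j⁻¹ * r * j) = r * j * r * ((j⁻¹ * j⁻¹) * (r * j))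
        from by group, hjinv, pow_succ, pow_two]
      group
    rw [← key]; exact K.mul_mem (K.mul_mem hr ha) hb
  have hpow : ∀ k : ℕ, (r * j) ^ (3 * k) ∈ K := by
    intro k
    induction k with
    | zero => simpa using K.one_mem
    | succ k ih =>
      rw [Nat.mul_succ, pow_add]
      exact K.mul_mem ih hcube
  have hsplit : (r * j) ^ (3 * (n / 3)) * (r * j) ^ (n % 3) = 1 := by
    rw [← pow_add, show 3 * (n / 3) + n % 3 = n from by omega]; exact hrj
  have hjK : j ∈ K := by
    have hmod : n % 3 = 1 ∨ n % 3 = 2 := by omega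
    rcases hmod with h1 | h2
    · rw [h1, pow_one] at hsplit
      have h : (r * j) ^ (3 * (n / 3)) = (r * j)⁻¹ := eq_inv_of_mul_eq_one_left hsplit
      have hje : j = r⁻¹ * ((r * j) ^ (3 * (n / 3)))⁻¹ := by rw [h]; group
      rw [hje]
      exact K.mul_mem (K.inv_mem hr) (K.inv_mem (hpow _))
    · rw [h2] at hsplit
      have hsplit' : (r * j) ^ (3 * (n / 3)) * (r * (j * r * j)) = 1 := by
        rw [show r * (j * r * j) = (r * j) ^ 2 from by rw [pow_two]; group]; exact hsplit
      have h : (r * j) ^ (3 * (n / 3)) = (r * (j * r * j))⁻¹ := eq_inv_of_mul_eq_one_left hsplit'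
      have h' : r * (j * r * j) = ((r * j) ^ (3 * (n / 3)))⁻¹ := by rw [h, inv_inv]
      have hje : j * r * j = r⁻¹ * ((r * j) ^ (3 * (n / 3)))⁻¹ := by rw [← h']; group
      have hjrj : j * r * j ∈ K := by
        rw [hje]; exact K.mul_mem (K.inv_mem hr) (K.inv_mem (hpow _))
      have hjinvK : j⁻¹ ∈ K := by
        have heq : j⁻¹ = (j * r * j⁻¹)⁻¹ * (j * r * j) := by
          rw [show (j * r * j⁻¹)⁻¹ * (j * r * j) = j * j from by group, hj2]
        rw [heq]
        exact K.mul_mem (K.inv_mem ha) hjrj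
      simpa using K.inv_mem hjinvK
  apply le_antisymm
  · rw [hK]
    apply Subgroup.closure_le _ |>.mpr
    intro x hx
    have hrm : r ∈ Subgroup.closure ({r, j} : Set G) := Subgroup.subset_closure (by simp)
    have hjm : j ∈ Subgroup.closure ({r, j} : Set G) := Subgroup.subset_closure (by simp)
    rcases hx with h | h | h <;> subst h
    · exact hrm
    · exact Subgroup.mul_mem _ (Subgroup.mul_mem _ hjm hrm) (Subgroup.inv_mem _ hjm)
    · exact Subgroup.mul_mem _ (Subgroup.mul_mem _ (Subgroup.inv_mem _ hjm) hrm) hjm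
  · apply Subgroup.closure_le _ |>.mpr
    intro x hx
    rcases hx with h | h <;> subst h
    · exact hr
    · exact hjK
end

section
/- Let t = (√3 + i)(i − (1+i)√2)/2 ∈ ℂ and consider the cubic polynomial P(X) = X³ − tX² + conj(t)X − 1 over ℂ. Then z = −(i + √3)/2 is a root of P and is a root of unity (indeed z¹² = 1), and every root w of P with w ≠ z is not a root of unity: wⁿ ≠ 1 for every integer n ≥ 1. -/
set_option maxHeartbeats 1000000 in
/-- with t = (√3+i)(i−(1+i)√2)/2, the cubic X³ − tX² + conj(t)X − 1 has
z = −(i+√3)/2 as a root, z is a root of unity (z¹² = 1), and every other root is not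
a root of unity. -/
theorem stmt_18 (t z : ℂ)
    (ht : t = (Real.sqrt 3 + Complex.I) * (Complex.I - (1 + Complex.I) * Real.sqrt 2) / 2)
    (hz : z = -(Complex.I + Real.sqrt 3) / 2) :
    z ^ 3 - t * z ^ 2 + starRingEnd ℂ t * z - 1 = 0 ∧
    z ^ 12 = 1 ∧
    ∀ w : ℂ, w ^ 3 - t * w ^ 2 + starRingEnd ℂ t * w - 1 = 0 → w ≠ z →
      ∀ n : ℕ, 1 ≤ n → w ^ n ≠ 1 := by
  have hs2 : ((Real.sqrt 2:ℝ):ℂ)^2 = 2 := by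
    norm_cast
    exact Real.sq_sqrt (by norm_num)
  have hs3 : ((Real.sqrt 3:ℝ):ℂ)^2 = 3 := by
    norm_cast
    exact Real.sq_sqrt (by norm_num)
  have Isq : Complex.I^2 = -1 := Complex.I_sq
  have hct : starRingEnd ℂ t
      = ((Real.sqrt 3:ℂ) - Complex.I) * (-Complex.I - (1 - Complex.I) * (Real.sqrt 2:ℂ)) / 2 := by
    rw [ht]
    simp only [map_div₀, map_mul, map_add, map_sub, map_one, Complex.conj_I,
      Complex.conj_ofReal, map_ofNat]
    ring
  have hP : z ^ 3 - t * z ^ 2 + starRingEnd ℂ t * z - 1 = 0 := by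
    rw [hct, ht, hz]
    linear_combination ((3/8:ℂ) + (-1/8:ℂ)*Complex.I + (-1/8:ℂ)*(Real.sqrt 3:ℂ) + (-1/8:ℂ)*(Real.sqrt 3:ℂ)*Complex.I + (-1/8:ℂ)*(Real.sqrt 2:ℂ) + (1/8:ℂ)*(Real.sqrt 2:ℂ)*Complex.I + (1/8:ℂ)*(Real.sqrt 2:ℂ)*(Real.sqrt 3:ℂ) + (1/8:ℂ)*(Real.sqrt 2:ℂ)*(Real.sqrt 3:ℂ)*Complex.I) * hs3 + ((1/8:ℂ) + (-3/8:ℂ)*Complex.I + (-1/8:ℂ)*Complex.I^2 + (-3/8:ℂ)*(Real.sqrt 3:ℂ) + (-3/8:ℂ)*(Real.sqrt 3:ℂ)*Complex.I + (-3/8:ℂ)*(Real.sqrt 3:ℂ)^2 + (-3/8:ℂ)*(Real.sqrt 2:ℂ) + (3/8:ℂ)*(Real.sqrt 2:ℂ)*Complex.I + (1/8:ℂ)*(Real.sqrt 2:ℂ)*Complex.I^2 + (3/8:ℂ)*(Real.sqrt 2:ℂ)*(Real.sqrt 3:ℂ) + (3/8:ℂ)*(Real.sqrt 2:ℂ)*(Real.sqrt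 3:ℂ)*Complex.I + (3/8:ℂ)*(Real.sqrt 2:ℂ)*(Real.sqrt 3:ℂ)^2) * Isq
  have h6 : z ^ 6 = -1 := by
    rw [hz]
    linear_combination ((-21/64:ℂ) + (-1/32:ℂ)*(Real.sqrt 3:ℂ)*Complex.I + (-3/16:ℂ)*(Real.sqrt 3:ℂ)^2 + (3/32:ℂ)*(Real.sqrt 3:ℂ)^3*Complex.I + (1/64:ℂ)*(Real.sqrt 3:ℂ)^4) * hs3 + ((1/64:ℂ) + (-1/64:ℂ)*Complex.I^2 + (1/64:ℂ)*Complex.I^4 + (-3/32:ℂ)*(Real.sqrt 3:ℂ)*Complex.I + (3/32:ℂ)*(Real.sqrt 3:ℂ)*Complex.I^3 + (-15/64:ℂ)*(Real.sqrt 3:ℂ)^2 + (15/64:ℂ)*(Real.sqrt 3:ℂ)^2*Complex.I^2 + (5/16:ℂ)*(Real.sqrt 3:ℂ)^3*Complex.I + (15/64:ℂ)*(Real.sqrt 3:ℂ)^4) * Isq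
  have h12 : z ^ 12 = 1 := by
    have h : z ^ 12 = (z ^ 6) ^ 2 := by ring
    rw [h, h6]; ring
  refine ⟨hP, h12, ?_⟩
  intro w hw hwz n hn hwn
  have hw0 : w ≠ 0 := by
    intro h
    rw [h, zero_pow (by omega : n ≠ 0)] at hwn
    exact zero_ne_one hwn
  -- the quadratic factor
  have hfac : w ^ 3 - t * w ^ 2 + starRingEnd ℂ t * w - 1
      = (w - z) * (w ^ 2 + (z - t) * w + (Complex.I - (Real.sqrt 3:ℂ)) / 2) := by
    rw [hct, ht, hz]
    linear_combination ((1/4:ℂ) + (1/4:ℂ)*w + (1/4:ℂ)*Complex.I*w + (-1/4:ℂ)*(Real.sqrt 2:ℂ)*w + (-1/4:ℂ)*(Real.sqrt 2:ℂ)*Complex.I*w) * hs3 + ((-1/4:ℂ) + (3/4:ℂ)*w + (1/4:ℂ)*Complex.I*w + (1/2:ℂ)*(Real.sqrt 3:ℂ)*w + (-3/4:ℂ)*(Real.sqrt 2:ℂ)*w + (-1/4:ℂ)*(Real.sqrt 2:ℂ)*Complex.I*w + (-1/2:ℂ)*(Real.sqrt 2:ℂ)*(Real.sqrt 3:ℂ)*w)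 * Isq
  have hQ : w ^ 2 + (z - t) * w + (Complex.I - (Real.sqrt 3:ℂ)) / 2 = 0 := by
    rw [hfac] at hw
    rcases mul_eq_zero.mp hw with h | h
    · exact absurd (sub_eq_zero.mp h) hwz
    · exact h
  have hQ' : w ^ 2 + (-(Complex.I + (Real.sqrt 3:ℂ)) / 2
        - (Real.sqrt 3 + Complex.I) * (Complex.I - (1 + Complex.I) * Real.sqrt 2) / 2) * w
      + (Complex.I - (Real.sqrt 3:ℂ)) / 2 = 0 := by
    rw [← hz, ← ht]; exact hQ
  have hccb : ((((Real.sqrt 2:ℂ)*(Real.sqrt 3:ℂ) - (Real.sqrt 2:ℂ)) + ((Real.sqrt 2:ℂ)*(Real.sqrt 3:ℂ) + (Real.sqrt 2:ℂ))*Complex.I)/4) * ((((Real.sqrt 2:ℂ)*(Real.sqrt 3:ℂ) - (Real.sqrt 2:ℂ)) - ((Real.sqrt 2:ℂ)*(Real.sqrt 3:ℂ) + (Real.sqrt 2:ℂ))*Complex.I)/4) = 1 := by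
    linear_combination ((1/2:ℂ)) * hs2 + ((1/8:ℂ)*(Real.sqrt 2:ℂ)^2) * hs3 + ((-1/16:ℂ)*(Real.sqrt 2:ℂ)^2 + (-1/8:ℂ)*(Real.sqrt 2:ℂ)^2*(Real.sqrt 3:ℂ) + (-1/16:ℂ)*(Real.sqrt 2:ℂ)^2*(Real.sqrt 3:ℂ)^2) * Isq
  have hcb2 : ((((Real.sqrt 2:ℂ)*(Real.sqrt 3:ℂ) - (Real.sqrt 2:ℂ)) - ((Real.sqrt 2:ℂ)*(Real.sqrt 3:ℂ) + (Real.sqrt 2:ℂ))*Complex.I)/4)^2 = z := by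
    rw [hz]
    linear_combination ((-1/4:ℂ)*Complex.I + (-1/4:ℂ)*(Real.sqrt 3:ℂ)) * hs2 + ((-1/8:ℂ)*(Real.sqrt 2:ℂ)^2*Complex.I) * hs3 + ((1/16:ℂ)*(Real.sqrt 2:ℂ)^2 + (1/8:ℂ)*(Real.sqrt 2:ℂ)^2*(Real.sqrt 3:ℂ) + (1/16:ℂ)*(Real.sqrt 2:ℂ)^2*(Real.sqrt 3:ℂ)^2) * Isq
  have hcb0 : ((((Real.sqrt 2:ℂ)*(Real.sqrt 3:ℂ) - (Real.sqrt 2:ℂ)) - ((Real.sqrt 2:ℂ)*(Real.sqrt 3:ℂ) + (Real.sqrt 2:ℂ))*Complex.I)/4) ≠ 0 := by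
    intro h
    rw [h, mul_zero] at hccb
    exact zero_ne_one hccb
  set v : ℂ := w * ((((Real.sqrt 2:ℂ)*(Real.sqrt 3:ℂ) - (Real.sqrt 2:ℂ)) - ((Real.sqrt 2:ℂ)*(Real.sqrt 3:ℂ) + (Real.sqrt 2:ℂ))*Complex.I)/4) with hvdef
  have hv : v ^ 2 - ((Real.sqrt 2:ℂ) - 2) * v + 1 = 0 := by
    rw [hvdef]
    linear_combination ((((Real.sqrt 2:ℂ)*(Real.sqrt 3:ℂ) - (Real.sqrt 2:ℂ)) - ((Real.sqrt 2:ℂ)*(Real.sqrt 3:ℂ) + (Real.sqrt 2:ℂ))*Complex.I)/4)^2 * hQ' + ((-1/2:ℂ) + (1/4:ℂ)*(Real.sqrt 2:ℂ)*w + (1/4:ℂ)*(Real.sqrt 2:ℂ)*Complex.I*w + (-1/4:ℂ)*(Real.sqrt 2:ℂ)*(Real.sqrt 3:ℂ)*w + (1/4:ℂ)*(Real.sqrt 2:ℂ)*(Real.sqrt 3:ℂ)*Complex.I*w) * hs2 + ((-3/16:ℂ)*(Real.sqrt 2:ℂ)^2 + (-1/16:ℂ)*(Real.sqrt 2:ℂ)^2*w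 + (-1/16:ℂ)*(Real.sqrt 2:ℂ)^2*Complex.I*w + (1/16:ℂ)*(Real.sqrt 2:ℂ)^2*(Real.sqrt 3:ℂ)*w + (-1/16:ℂ)*(Real.sqrt 2:ℂ)^2*(Real.sqrt 3:ℂ)*Complex.I + (-1/16:ℂ)*(Real.sqrt 2:ℂ)^2*(Real.sqrt 3:ℂ)*Complex.I*w + (1/16:ℂ)*(Real.sqrt 2:ℂ)^3*w + (1/16:ℂ)*(Real.sqrt 2:ℂ)^3*Complex.I*w + (-1/16:ℂ)*(Real.sqrt 2:ℂ)^3*(Real.sqrt 3:ℂ)*w + (1/16:ℂ)*(Real.sqrt 2:ℂ)^3*(Real.sqrt 3:ℂ)*Complex.I*w) * hs3 + ((-1/16:ℂ)*(Real.sqrt 2:ℂ)^2 + (1/16:ℂ)*(Real.sqrt 2:ℂ)^2*w + (-1/32:ℂ)*(Real.sqrt 2:ℂ)^2*Complex.I + (3/32:ℂ)*(Real.sqrt 2:ℂ)^2*Complex.I*w + (1/32:ℂ)*(Real.sqrt 2:ℂ)^2*Complex.I^2*w + (1/32:ℂ)*(Real.sqrt 2:ℂ)^2*(Real.sqrt 3:ℂ)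 + (-1/32:ℂ)*(Real.sqrt 2:ℂ)^2*(Real.sqrt 3:ℂ)*w + (-1/16:ℂ)*(Real.sqrt 2:ℂ)^2*(Real.sqrt 3:ℂ)*Complex.I + (3/32:ℂ)*(Real.sqrt 2:ℂ)^2*(Real.sqrt 3:ℂ)*Complex.I*w + (1/16:ℂ)*(Real.sqrt 2:ℂ)^2*(Real.sqrt 3:ℂ)*Complex.I^2*w + (1/8:ℂ)*(Real.sqrt 2:ℂ)^2*(Real.sqrt 3:ℂ)^2 + (-1/32:ℂ)*(Real.sqrt 2:ℂ)^2*(Real.sqrt 3:ℂ)^2*Complex.I + (1/32:ℂ)*(Real.sqrt 2:ℂ)^2*(Real.sqrt 3:ℂ)^2*Complex.I*w + (1/32:ℂ)*(Real.sqrt 2:ℂ)^2*(Real.sqrt 3:ℂ)^2*Complex.I^2*w + (1/32:ℂ)*(Real.sqrt 2:ℂ)^2*(Real.sqrt 3:ℂ)^3 + (-1/32:ℂ)*(Real.sqrt 2:ℂ)^2*(Real.sqrt 3:ℂ)^3*w + (1/32:ℂ)*(Real.sqrt 2:ℂ)^2*(Real.sqrt 3:ℂ)^3*Complex.I*w + (-1/16:ℂ)*(Real.sqrt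 2:ℂ)^3*w + (-3/32:ℂ)*(Real.sqrt 2:ℂ)^3*Complex.I*w + (-1/32:ℂ)*(Real.sqrt 2:ℂ)^3*Complex.I^2*w + (1/32:ℂ)*(Real.sqrt 2:ℂ)^3*(Real.sqrt 3:ℂ)*w + (-3/32:ℂ)*(Real.sqrt 2:ℂ)^3*(Real.sqrt 3:ℂ)*Complex.I*w + (-1/16:ℂ)*(Real.sqrt 2:ℂ)^3*(Real.sqrt 3:ℂ)*Complex.I^2*w + (-1/32:ℂ)*(Real.sqrt 2:ℂ)^3*(Real.sqrt 3:ℂ)^2*Complex.I*w + (-1/32:ℂ)*(Real.sqrt 2:ℂ)^3*(Real.sqrt 3:ℂ)^2*Complex.I^2*w + (1/32:ℂ)*(Real.sqrt 2:ℂ)^3*(Real.sqrt 3:ℂ)^3*w + (-1/32:ℂ)*(Real.sqrt 2:ℂ)^3*(Real.sqrt 3:ℂ)^3*Complex.I*w) * Isq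
  have hv0 : v ≠ 0 := mul_ne_zero hw0 hcb0
  have hvinv : v * v⁻¹ = 1 := mul_inv_cancel₀ hv0
  have hvsum : v + v⁻¹ = -2 + (Real.sqrt 2:ℂ) := by
    linear_combination v⁻¹ * hv + ((Real.sqrt 2:ℂ) - 2 - v) * hvinv
  have hvm : v ^ (24 * n) = 1 := by
    have e1 : v ^ (24 * n) = (v ^ n) ^ 24 := by rw [← pow_mul, Nat.mul_comm]
    have e2 : v ^ n = ((((Real.sqrt 2:ℂ)*(Real.sqrt 3:ℂ) - (Real.sqrt 2:ℂ)) - ((Real.sqrt 2:ℂ)*(Real.sqrt 3:ℂ) + (Real.sqrt 2:ℂ))*Complex.I)/4) ^ n := by rw [hvdef, mul_pow, hwn, one_mul]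
    rw [e1, e2, ← pow_mul, show n * 24 = 2 * (12 * n) by ring, pow_mul, pow_mul, hcb2, h12, one_pow]
  -- real conjugate sequence
  have hs2r : Real.sqrt 2 ^ 2 = 2 := Real.sq_sqrt (by norm_num)
  have h240 : (0:ℝ) ≤ 2 + 4 * Real.sqrt 2 := by positivity
  have hr2 : Real.sqrt (2 + 4 * Real.sqrt 2) ^ 2 = 2 + 4 * Real.sqrt 2 := Real.sq_sqrt h240
  have hr0 : (0:ℝ) ≤ Real.sqrt (2 + 4 * Real.sqrt 2) := Real.sqrt_nonneg _
  have hsq0 : (0:ℝ) ≤ Real.sqrt 2 := Real.sqrt_nonneg _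
  set μ : ℝ := (-(2 + Real.sqrt 2) - Real.sqrt (2 + 4 * Real.sqrt 2)) / 2 with hmudef
  set ν : ℝ := (-(2 + Real.sqrt 2) + Real.sqrt (2 + 4 * Real.sqrt 2)) / 2 with hnudef
  have hmusum : μ + ν = -2 - Real.sqrt 2 := by rw [hmudef, hnudef]; ring
  have hmunu : μ * ν = 1 := by
    rw [hmudef, hnudef]
    linear_combination (1/4 : ℝ) * hs2r - (1/4 : ℝ) * hr2
  have hslb : (4:ℝ)/3 ≤ Real.sqrt 2 := by nlinarith [hs2r, hsq0]
  have hrlb : 4 - Real.sqrt 2 ≤ Real.sqrt (2 + 4 * Real.sqrt 2) := by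
    nlinarith [hr2, hr0, hslb, hsq0, hs2r]
  have hmule : μ ≤ -3 := by
    rw [hmudef]
    linarith
  have hnule : ν ≤ 0 := by
    rw [hnudef]
    nlinarith [hs2r, hr2, hr0, hsq0]
  have hnuge : -(1/2 : ℝ) ≤ ν := by
    rw [hnudef]
    nlinarith [hs2r, hr2, hr0, hsq0]
  -- the key induction
  have key : ∀ k : ℕ,
      (∃ p q : ℤ, v ^ k + (v⁻¹) ^ k = (p:ℂ) + (q:ℂ) * (Real.sqrt 2:ℂ) ∧
        μ ^ k + ν ^ k = (p:ℝ) - (q:ℝ) * Real.sqrt 2) ∧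
      (∃ p q : ℤ, v ^ (k+1) + (v⁻¹) ^ (k+1) = (p:ℂ) + (q:ℂ) * (Real.sqrt 2:ℂ) ∧
        μ ^ (k+1) + ν ^ (k+1) = (p:ℝ) - (q:ℝ) * Real.sqrt 2) := by
    intro k
    induction k with
    | zero =>
      constructor
      · exact ⟨2, 0, by norm_num, by norm_num⟩
      · refine ⟨-2, 1, ?_, ?_⟩
        · push_cast
          rw [pow_one, pow_one]
          linear_combination hvsum
        · push_cast
          rw [pow_one, pow_one]
          linarith [hmusum]
    | succ k ih =>
      obtain ⟨⟨p, q, h0c, h0r⟩, ⟨p', q', h1c, h1r⟩⟩ := ih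
      refine ⟨⟨p', q', h1c, h1r⟩, -2*p' + 2*q' - p, p' - 2*q' - q, ?_, ?_⟩
      · push_cast
        linear_combination (v^(k+1) + (v⁻¹)^(k+1)) * hvsum + ((-2:ℂ) + (Real.sqrt 2:ℂ)) * h1c
          - h0c - (v^k + (v⁻¹)^k) * hvinv + (q':ℂ) * hs2
      · push_cast
        linear_combination (μ^(k+1) + ν^(k+1)) * hmusum + (-2 - Real.sqrt 2) * h1r
          - h0r - (μ^k + ν^k) * hmunu + (q':ℝ) * hs2r
  -- growth of the conjugate sequence
  have hmuabs : 3 ≤ |μ| := by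
    rw [abs_of_nonpos (by linarith)]; linarith
  have hnuabs : |ν| ≤ 1/2 := abs_le.mpr ⟨by linarith, by linarith⟩
  have growth : ∀ k : ℕ, 1 ≤ k → 2 < |μ ^ k + ν ^ k| := by
    intro k hk
    have h1 : |μ| ^ k ≥ 3 := by
      calc (3:ℝ) ≤ |μ| := hmuabs
      _ = |μ| ^ 1 := (pow_one _).symm
      _ ≤ |μ| ^ k := pow_le_pow_right₀ (by linarith) hk
    have h2 : |ν| ^ k ≤ 1/2 := by
      calc |ν| ^ k ≤ |ν| ^ 1 := pow_le_pow_of_le_one (abs_nonneg _) (by linarith) hk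
      _ = |ν| := pow_one _
      _ ≤ 1/2 := hnuabs
    have h3 : |μ ^ k| - |ν ^ k| ≤ |μ ^ k + ν ^ k| := by
      have := abs_sub_abs_le_abs_sub (μ ^ k) (-(ν ^ k))
      simp only [abs_neg, sub_neg_eq_add] at this
      exact this
    rw [abs_pow, abs_pow] at h3
    linarith
  -- conclude
  obtain ⟨⟨p, q, hc, hr⟩, -⟩ := key (24 * n)
  have hvminv : (v⁻¹) ^ (24 * n) = 1 := by
    rw [inv_pow, hvm, inv_one]
  rw [hvm, hvminv] at hc
  have hre : (p:ℝ) + (q:ℝ) * Real.sqrt 2 = 2 := by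
    have h2 : ((p:ℝ) + (q:ℝ) * Real.sqrt 2 : ℂ) = ((2:ℝ):ℂ) := by push_cast; linear_combination -hc
    exact_mod_cast h2
  have hq0 : q = 0 := by
    by_contra hq
    apply irrational_sqrt_two
    refine ⟨(2 - p) / q, ?_⟩
    have hqr : ((q:ℚ):ℝ) ≠ 0 := by exact_mod_cast hq
    push_cast
    field_simp
    linarith
  have hp2 : p = 2 := by
    have hp : (p:ℝ) = 2 := by
      rw [hq0] at hre
      push_cast at hre
      linarith
    exact_mod_cast hp
  rw [hp2, hq0] at hr
  have := growth (24 * n) (by omega)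
  rw [hr] at this
  push_cast at this
  norm_num at this
end
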